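/- arXiv:1007.0797 — 5 statements merged into one kernel-verified Lean document; each statement's English description precedes it below -/
import Mathlib

section
/- Let G be a finite vertex-transitive graph. Then for every independent set A of G, |A|/|N[A]| ≤ α(G)/|V(G)|, where N[A] is the closed neighborhood of A (the set A together with all vertices adjacent to a vertex of A). -/
/-!
Fix a maximum independent set `K`. For any independent `A`, replacing `K ∩ N[A]` by `A` leaves an
independent set, so `|A| ≤ |K ∩ N[A]|`; this holds for every automorphic image `φ K` as well.
Averaging over `φ ∈ Aut G`: since the automorphism group acts transitively, each vertex lies in
`φ K` for the same proportion `α(G)/|V|` of all `φ`, so the average of `|φ K ∩ N[A]|` is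
`α(G) |N[A]| / |V|`.
-/

open Finset SimpleGraph

variable {α β : Type*}

/-- The direct (tensor) product of two simple graphs. -/
def tensorProd (G : SimpleGraph α) (H : SimpleGraph β) : SimpleGraph (α × β) where
  Adj x y := G.Adj x.1 y.1 ∧ H.Adj x.2 y.2
  symm := ⟨fun _ _ h => ⟨h.1.symm, h.2.symm⟩⟩
  loopless := ⟨fun x h => G.loopless.irrefl x.1 h.1⟩

/-- A set of vertices is independent iff it is a clique in the complement. -/
def IsIndepSet (G : SimpleGraph α) (s : Set α) : Prop := Gᶜ.IsClique s

/-- The independence number: the clique number of the complement. -/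
noncomputable def indepNum (G : SimpleGraph α) : ℕ := Gᶜ.cliqueNum

/-- A graph is vertex-transitive if its automorphism group acts transitively. -/
def VertexTransitive (G : SimpleGraph α) : Prop := ∀ u v : α, ∃ φ : G ≃g G, φ u = v

/-- The closed neighborhood of a set of vertices. -/
def closedNbhd (G : SimpleGraph α) (A : Set α) : Set α :=
  A ∪ {b | ∃ a ∈ A, G.Adj a b}

section TransitiveAction

variable {Γ X : Type*} [Group Γ] [MulAction Γ X] [MulAction.IsPretransitive Γ X] [Fintype Γ]
  [DecidableEq X]

theorem card_filter_smul_eq_eq_card_filter_smul_eq_self (x y : X) :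
    #{g : Γ | g • x = y} = #{g : Γ | g • x = x} := by
  obtain ⟨g₀, rfl⟩ := MulAction.exists_smul_eq Γ x y
  refine card_nbij' (g₀⁻¹ * ·) (g₀ * ·) ?_ ?_ ?_ ?_ <;> intro g <;>
    simp [mul_smul, inv_smul_eq_iff]

variable [Fintype X]

theorem card_filter_smul_mem_mul_card (x : X) (N : Finset X) :
    #{g : Γ | g • x ∈ N} * Fintype.card X = Fintype.card Γ * #N := by
  have hfiber (t : Finset X) : #{g : Γ | g • x ∈ t} = #t * #{g : Γ | g • x = x} := by
    rw [← sum_card_fiberwise_eq_card_filter univ t (· • x)]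
    exact sum_const_nat fun y _ => card_filter_smul_eq_eq_card_filter_smul_eq_self x y
  have hcardΓ := hfiber univ
  simp only [mem_univ, filter_true, card_univ] at hcardΓ
  rw [hfiber, hcardΓ]
  ring

theorem sum_card_filter_smul_mem_mul_card (K N : Finset X) :
    (∑ g : Γ, #{u ∈ K | g • u ∈ N}) * Fintype.card X = Fintype.card Γ * #K * #N := by
  have hdouble := sum_card_bipartiteAbove_eq_sum_card_bipartiteBelow (s := univ) (t := K)
    (r := fun (g : Γ) u => g • u ∈ N)
  simp only [bipartiteAbove, bipartiteBelow] at hdouble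
  rw [hdouble, sum_mul, sum_congr rfl fun u _ => card_filter_smul_mem_mul_card u N, sum_const,
    smul_eq_mul]
  ring

theorem mul_card_le_of_le_card_filter_smul_mem {K N : Finset X} {m : ℕ}
    (h : ∀ g : Γ, m ≤ #{u ∈ K | g • u ∈ N}) : m * Fintype.card X ≤ #K * #N := by
  have hΓ : 0 < Fintype.card Γ := Fintype.card_pos
  refine le_of_mul_le_mul_left ?_ hΓ
  calc Fintype.card Γ * (m * Fintype.card X)
      = (∑ _g : Γ, m) * Fintype.card X := by simp [mul_assoc]
    _ ≤ (∑ g : Γ, #{u ∈ K | g • u ∈ N}) * Fintype.card X := by gcongr with g; exact h g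
    _ = Fintype.card Γ * (#K * #N) := by rw [sum_card_filter_smul_mem_mul_card]; ring

end TransitiveAction

instance RelIso.finite {β : Type*} [Finite α] [Finite β] {r : α → α → Prop}
    {s : β → β → Prop} : Finite (r ≃r s) :=
  Finite.of_injective _ RelIso.toEquiv_injective

theorem VertexTransitive.isPretransitive {G : SimpleGraph α} (hG : VertexTransitive G) :
    MulAction.IsPretransitive (G ≃g G) α :=
  ⟨hG⟩

namespace IsIndepSet

variable {G : SimpleGraph α}

theorem finsetMap_iso {K : Finset α} (hK : _root_.IsIndepSet G K) (φ : G ≃g G) :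
    _root_.IsIndepSet G (K.map φ.toEquiv.toEmbedding) := by
  rintro _ hx _ hy hxy
  simp only [coe_map, Set.mem_image, mem_coe] at hx hy
  obtain ⟨x, hx, rfl⟩ := hx
  obtain ⟨y, hy, rfl⟩ := hy
  have hKxy := hK hx hy fun h => hxy (h ▸ rfl)
  rw [compl_adj] at hKxy ⊢
  exact ⟨hxy, fun h => hKxy.2 (φ.map_adj_iff.mp h)⟩

theorem card_le_card_filter_mem [Finite α] [DecidableEq α] {A K N : Finset α}
    (hA : _root_.IsIndepSet G A) (hK : _root_.IsIndepSet G K) (hKmax : #K = _root_.indepNum G)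
    (hN : closedNbhd G A ⊆ N) :
    #A ≤ #{u ∈ K | u ∈ N} := by
  have hAN : Disjoint A {u ∈ K | u ∉ N} :=
    disjoint_left.mpr fun a ha ha' => (mem_filter.mp ha').2 (hN (Or.inl ha))
  have hcross {a b : α} (ha : a ∈ A) (hb : b ∉ N) : Gᶜ.Adj a b :=
    (compl_adj G a b).mpr
      ⟨fun h => hb (hN (Or.inl (h ▸ ha))), fun h => hb (hN (Or.inr ⟨a, ha, h⟩))⟩
  have hswap : _root_.IsIndepSet G ↑(A ∪ {u ∈ K | u ∉ N}) := by
    intro x hx y hy hxy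
    simp only [coe_union, coe_filter, Set.mem_union, mem_coe, Set.mem_ofPred_eq] at hx hy
    rcases hx with hx | ⟨hxK, hxN⟩ <;> rcases hy with hy | ⟨hyK, hyN⟩
    · exact hA hx hy hxy
    · exact hcross hx hyN
    · exact (hcross hy hxN).symm
    · exact hK hxK hyK hxy
  have hswap_card := (card_union_of_disjoint hAN).symm.trans_le hswap.card_le_cliqueNum
  have hsplit := card_filter_add_card_filter_not (s := K) (p := (· ∈ N))
  unfold _root_.indepNum at hKmax
  omega

end IsIndepSet

theorem stmt2 [Fintype α] (G : SimpleGraph α) (hG : VertexTransitive G)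
    (A : Set α) (hA : _root_.IsIndepSet G A) :
    A.ncard * Fintype.card α ≤ _root_.indepNum G * (closedNbhd G A).ncard := by
  classical
  have := Fintype.ofFinite (G ≃g G)
  have := hG.isPretransitive
  obtain ⟨K, hK⟩ : ∃ K, Gᶜ.IsNClique (_root_.indepNum G) K :=
    Gᶜ.exists_isNClique_cliqueNum
  rw [Set.ncard_eq_toFinset_card' A, Set.ncard_eq_toFinset_card' (closedNbhd G A),
    ← hK.card_eq]
  refine mul_card_le_of_le_card_filter_smul_mem fun φ : G ≃g G => ?_
  have hA' : _root_.IsIndepSet G ↑A.toFinset := by rwa [Set.coe_toFinset]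
  have hφ := hA'.card_le_card_filter_mem (IsIndepSet.finsetMap_iso hK.isClique φ)
    (by rw [card_map, hK.card_eq]) (N := (closedNbhd G A).toFinset) (by simp)
  simpa [filter_map] using hφ
end

section
/- Let G be a finite vertex-transitive graph. Then for every n ≥ 1, α(Gⁿ) = α(G)·|V(G)|^{n-1}, where Gⁿ is the n-fold direct (tensor) power of G. -/
open Finset SimpleGraph

variable {α β : Type*}

/-- The n-fold direct (tensor) power of a graph: tuples are adjacent iff they are
adjacent in every coordinate (for n ≥ 1 the condition x ≠ y is automatic). -/
def tensorPow (G : SimpleGraph α) (n : ℕ) : SimpleGraph (Fin n → α) where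
  Adj x y := x ≠ y ∧ ∀ i, G.Adj (x i) (y i)
  symm := ⟨fun _ _ h => ⟨h.1.symm, fun i => (h.2 i).symm⟩⟩
  loopless := ⟨fun _ h => h.1 rfl⟩

/-!
The no-homomorphism lemma of Albertson and Collins: if `f : G →g H` and `H` is
vertex-transitive, then `α(H) / |H| ≤ α(G) / |G|`. For a maximum independent set `S` of `H`
and an automorphism `σ` of `H`, the pullback `f⁻¹(σ⁻¹ S)` is independent in `G`; averaged over
all `σ` its size is `|G| |S| / |H|`, because for fixed `v` the point `σ v` is uniformly
distributed over `H`. The projection `Gⁿ →g G` and the diagonal `G →g Gⁿ` are homomorphisms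
between vertex-transitive graphs, so `G` and `Gⁿ` have the same independence ratio.
-/

namespace MulAction

theorem card_filter_smul_mem_mul_card {Γ X : Type*} [Group Γ] [MulAction Γ X]
    [IsPretransitive Γ X] [Fintype Γ] [Fintype X] [DecidableEq X] (S : Finset X) (x : X) :
    #{g : Γ | g • x ∈ S} * Fintype.card X = #S * Fintype.card Γ := by
  have h_const (y : X) : #{g : Γ | g • y ∈ S} = #{g : Γ | g • x ∈ S} := by
    obtain ⟨h, rfl⟩ := exists_smul_eq Γ x y
    exact card_equiv (Equiv.mulRight h) (by simp [mul_smul])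
  have h_preimage (g : Γ) : #{y : X | g • y ∈ S} = #S :=
    card_equiv (toPerm g) (by simp)
  calc #{g : Γ | g • x ∈ S} * Fintype.card X = ∑ y : X, #{g : Γ | g • y ∈ S} := by
        simp [h_const, mul_comm]
    _ = ∑ g : Γ, #{y : X | g • y ∈ S} :=
        sum_card_bipartiteAbove_eq_sum_card_bipartiteBelow (fun y g => g • y ∈ S)
    _ = #S * Fintype.card Γ := by simp [h_preimage, mul_comm]

end MulAction

theorem indepNum_eq_indepNum (G : SimpleGraph α) : _root_.indepNum G = G.indepNum :=
  cliqueNum_compl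

namespace SimpleGraph

theorem indepNum_le_card [Fintype α] (G : SimpleGraph α) : G.indepNum ≤ Fintype.card α := by
  obtain ⟨s, hs⟩ := G.exists_isNIndepSet_indepNum
  exact hs.card_eq ▸ s.card_le_univ

theorem Hom.indepNum_mul_card_le [Fintype α] [Fintype β] {G : SimpleGraph α}
    {H : SimpleGraph β} (f : G →g H) (hH : VertexTransitive H) :
    H.indepNum * Fintype.card α ≤ G.indepNum * Fintype.card β := by
  classical
  have : MulAction.IsPretransitive (H ≃g H) β := ⟨hH⟩
  have : Finite (H ≃g H) := Finite.of_injective _ RelIso.toEquiv_injective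
  let := Fintype.ofFinite (H ≃g H)
  obtain ⟨S, hS⟩ := H.exists_isNIndepSet_indepNum
  have h_pullback_indep (σ : H ≃g H) : G.IsIndepSet ({a | σ (f a) ∈ S} : Finset α) := by
    intro a ha b hb _ hab
    simp only [coe_filter, mem_univ, true_and] at ha hb
    have h_adj := σ.map_adj_iff.2 (f.map_adj hab)
    exact hS.isIndepSet ha hb h_adj.ne h_adj
  have h_double_count : ∑ σ : H ≃g H, #{a | σ (f a) ∈ S} = ∑ a : α, #{σ : H ≃g H | σ • f a ∈ S} :=
    (sum_card_bipartiteAbove_eq_sum_card_bipartiteBelow (fun a (σ : H ≃g H) => σ • f a ∈ S)).symm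
  have h_average : (∑ σ : H ≃g H, #{a | σ (f a) ∈ S}) * Fintype.card β
      = Fintype.card α * H.indepNum * Fintype.card (H ≃g H) := by
    rw [h_double_count, sum_mul,
      sum_congr rfl fun a _ => MulAction.card_filter_smul_mem_mul_card S (f a), hS.card_eq,
      sum_const, card_univ, smul_eq_mul, mul_assoc]
  have h_bound : ∑ σ : H ≃g H, #{a | σ (f a) ∈ S} ≤ Fintype.card (H ≃g H) * G.indepNum := by
    calc ∑ σ : H ≃g H, #{a | σ (f a) ∈ S} ≤ ∑ _σ : H ≃g H, G.indepNum :=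
          sum_le_sum fun σ _ => (h_pullback_indep σ).card_le_indepNum
      _ = Fintype.card (H ≃g H) * G.indepNum := by rw [sum_const, card_univ, smul_eq_mul]
  refine le_of_mul_le_mul_right ?_ (Fintype.card_pos (α := H ≃g H))
  calc H.indepNum * Fintype.card α * Fintype.card (H ≃g H)
      = (∑ σ : H ≃g H, #{a | σ (f a) ∈ S}) * Fintype.card β := by rw [h_average]; ring
    _ ≤ Fintype.card (H ≃g H) * G.indepNum * Fintype.card β := Nat.mul_le_mul_right _ h_bound
    _ = G.indepNum * Fintype.card β * Fintype.card (H ≃g H) := by ring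

def tensorPowCongr {n : ℕ} {G : SimpleGraph α} {H : SimpleGraph β} (φ : Fin n → G ≃g H) :
    tensorPow G n ≃g tensorPow H n where
  toEquiv := Equiv.piCongrRight fun i => (φ i).toEquiv
  map_rel_iff' {_ _} := by
    show _ ≠ _ ∧ _ ↔ _ ≠ _ ∧ _
    exact and_congr (Equiv.injective _).ne_iff (forall_congr' fun i => (φ i).map_adj_iff)

theorem VertexTransitive.tensorPow {G : SimpleGraph α} (hG : VertexTransitive G) (n : ℕ) :
    VertexTransitive (tensorPow G n) := by
  intro u v
  choose φ hφ using fun i => hG (u i) (v i)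
  exact ⟨tensorPowCongr φ, funext hφ⟩

def tensorPowEval (G : SimpleGraph α) {n : ℕ} (i : Fin n) : tensorPow G n →g G where
  toFun x := x i
  map_rel' h := h.2 i

def tensorPowDiag (G : SimpleGraph α) (n : ℕ) [NeZero n] : G →g tensorPow G n where
  toFun a _ := a
  map_rel' h := ⟨fun h_eq => h.ne (congrFun h_eq 0), fun _ => h⟩

end SimpleGraph

theorem stmt6 [Fintype α] (G : SimpleGraph α) (hG : VertexTransitive G)
    (n : ℕ) (hn : 1 ≤ n) :
    _root_.indepNum (tensorPow G n) = _root_.indepNum G * Fintype.card α ^ (n - 1) := by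
  have : NeZero n := ⟨by omega⟩
  have h_card : Fintype.card (Fin n → α) = Fintype.card α ^ (n - 1) * Fintype.card α := by
    rw [Fintype.card_fun, Fintype.card_fin, ← pow_succ, Nat.sub_add_cancel hn]
  have h_upper := (tensorPowDiag G n).indepNum_mul_card_le (hG.tensorPow n)
  have h_lower := (tensorPowEval G (0 : Fin n)).indepNum_mul_card_le hG
  rw [h_card] at h_upper h_lower
  rw [indepNum_eq_indepNum, indepNum_eq_indepNum]
  rcases (Fintype.card α).eq_zero_or_pos with h_empty | h_pos
  · have hG_zero := G.indepNum_le_card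
    have hGn_zero := (tensorPow G n).indepNum_le_card
    simp_all
  · refine Nat.eq_of_mul_eq_mul_right h_pos (le_antisymm ?_ ?_) <;> linarith
end

section
/- Let G be a finite non-empty vertex-transitive graph with α(G)/|V(G)| = 1/2. Then G is bipartite. -/
/-!
If `G` is not bipartite it has a closed walk of odd length `2k + 1`, i.e. a homomorphism from
the cycle `circulantGraph {1}` on `ZMod (2k + 1)`, whose independence number is at most `k`.
For vertex-transitive `G`, averaging the translates of a maximum independent set of `G` under
`Aut G` and pulling them back along a homomorphism `H →g G` gives the no-homomorphism bound
`|H| α(G) ≤ |G| α(H)`. Hence `α(G) / |G| ≤ k / (2k + 1) < 1 / 2`.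
-/

open Finset SimpleGraph

variable {α β : Type*}

section TransitiveAction

variable {Γ : Type*} [Group Γ] [MulAction Γ α] [MulAction.IsPretransitive Γ α]
  [Fintype Γ] [Fintype α] [DecidableEq α]

theorem card_mul_card_filter_smul_mem (s : Finset α) (w : α) :
    Fintype.card α * #{g : Γ | g • w ∈ s} = Fintype.card Γ * #s := by
  have hconst : ∀ x, #{g : Γ | g • x ∈ s} = #{g : Γ | g • w ∈ s} := by
    intro x
    obtain ⟨h, rfl⟩ := MulAction.exists_smul_eq Γ w x
    refine card_bij' (fun g _ => g * h) (fun g _ => g * h⁻¹) ?_ ?_ ?_ ?_ <;>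
      simp [mul_smul]
  calc Fintype.card α * #{g : Γ | g • w ∈ s}
      = ∑ x : α, #{g : Γ | g • x ∈ s} := by simp [hconst]
    _ = ∑ g : Γ, #{x : α | g • x ∈ s} := by simp only [card_filter]; exact sum_comm
    _ = ∑ _g : Γ, #s := by
        congr! 1 with g
        exact card_nbij' (g • ·) (g⁻¹ • ·) (fun x hx => by simpa using hx)
          (fun x hx => by simpa using hx) (fun x _ => by simp) (fun x _ => by simp)
    _ = Fintype.card Γ * #s := by simp

theorem exists_card_mul_le_card_mul_card_filter_smul_mem [Fintype β] (s : Finset α)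
    (f : β → α) :
    ∃ g : Γ, Fintype.card β * #s ≤ Fintype.card α * #{i : β | g • f i ∈ s} := by
  have hsum : ∑ _g : Γ, Fintype.card β * #s =
      ∑ g : Γ, Fintype.card α * #{i : β | g • f i ∈ s} :=
    calc ∑ _g : Γ, Fintype.card β * #s
        = ∑ i : β, Fintype.card α * #{g : Γ | g • f i ∈ s} := by
          simp [card_mul_card_filter_smul_mem, mul_left_comm]
      _ = _ := by simp only [card_filter, ← mul_sum]; rw [sum_comm]
  obtain ⟨g, -, hg⟩ := exists_le_of_sum_le univ_nonempty hsum.le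
  exact ⟨g, hg⟩

end TransitiveAction

theorem VertexTransitive.card_mul_indepNum_le [Fintype α] [Fintype β] {G : SimpleGraph α}
    {H : SimpleGraph β} (hG : VertexTransitive G) (f : H →g G) :
    Fintype.card β * G.indepNum ≤ Fintype.card α * H.indepNum := by
  classical
  let : Fintype (G ≃g G) := Fintype.ofInjective _ DFunLike.coe_injective
  have : MulAction.IsPretransitive (G ≃g G) α := ⟨hG⟩
  obtain ⟨s, hs⟩ := G.exists_isNIndepSet_indepNum
  obtain ⟨φ, hφ⟩ := exists_card_mul_le_card_mul_card_filter_smul_mem (Γ := G ≃g G) s f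
  have hindep : H.IsIndepSet ({i : β | φ • f i ∈ s} : Finset β) := by
    intro i hi j hj _ hadj
    have hadj' : G.Adj (φ • f i) (φ • f j) := φ.map_adj_iff.mpr (f.map_adj hadj)
    simp only [coe_filter, mem_univ, true_and] at hi hj
    exact hs.isIndepSet hi hj hadj'.ne hadj'
  rw [hs.card_eq] at hφ
  exact hφ.trans (Nat.mul_le_mul_left _ hindep.card_le_indepNum)

theorem two_mul_indepNum_circulantGraph_one_le {n : ℕ} [NeZero n] (hn : 1 < n) :
    2 * (circulantGraph ({1} : Set (ZMod n))).indepNum ≤ n := by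
  have : Fact (1 < n) := ⟨hn⟩
  obtain ⟨t, ht⟩ := (circulantGraph ({1} : Set (ZMod n))).exists_isNIndepSet_indepNum
  have hdisj : Disjoint t (t.map (addRightEmbedding 1)) := by
    refine disjoint_left.mpr fun x hx hx' => ?_
    obtain ⟨y, hy, rfl⟩ := mem_map.mp hx'
    refine ht.isIndepSet hy hx (by simp) ?_
    simp
  have hunion := card_le_univ (t ∪ t.map (addRightEmbedding 1))
  rw [card_union_of_disjoint hdisj, card_map, ht.card_eq, ZMod.card] at hunion
  omega

namespace SimpleGraph.Walk

variable {G : SimpleGraph α} {u : α}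

theorem adj_getVert_val_add_one (p : G.Walk u u) [NeZero p.length] (i : ZMod p.length) :
    G.Adj (p.getVert i.val) (p.getVert (i + 1).val) := by
  have hiv : i.val < p.length := ZMod.val_lt i
  rcases Nat.lt_or_ge (i.val + 1) p.length with hlt | hge
  · have : Fact (1 < p.length) := ⟨by omega⟩
    rw [ZMod.val_add_of_lt (by rwa [ZMod.val_one]), ZMod.val_one]
    exact p.adj_getVert_succ hiv
  · have hlast : i.val + 1 = p.length := by omega
    have hwrap : i + 1 = 0 := by
      rw [← ZMod.natCast_zmod_val i, ← Nat.cast_add_one, hlast, ZMod.natCast_self]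
    have hadj := p.adj_getVert_succ hiv
    rw [hlast, p.getVert_length] at hadj
    rwa [hwrap, ZMod.val_zero, p.getVert_zero]

def toCirculantHom (p : G.Walk u u) [NeZero p.length] :
    circulantGraph ({1} : Set (ZMod p.length)) →g G where
  toFun i := p.getVert i.val
  map_rel' {i j} h := by
    rcases (circulantGraph_adj _ _ _).mp h with ⟨-, hij | hji⟩
    · rw [Set.mem_singleton_iff, sub_eq_iff_eq_add'] at hij
      rw [hij]
      exact (p.adj_getVert_val_add_one j).symm
    · rw [Set.mem_singleton_iff, sub_eq_iff_eq_add'] at hji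
      rw [hji]
      exact p.adj_getVert_val_add_one i

theorem length_ne_one (p : G.Walk u u) : p.length ≠ 1 := by
  intro h
  have hadj := p.adj_getVert_succ (i := 0) (by omega)
  rw [zero_add, ← h, p.getVert_length, p.getVert_zero] at hadj
  exact hadj.ne rfl

end SimpleGraph.Walk

theorem stmt8_general [Fintype α] (G : SimpleGraph α) (hG : VertexTransitive G)
    (heq : 2 * _root_.indepNum G = Fintype.card α) :
    G.Colorable 2 := by
  rw [two_colorable_iff_forall_loop_even]
  intro u p
  by_contra hodd
  obtain ⟨k, hk⟩ := Nat.not_even_iff_odd.mp hodd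
  have : NeZero p.length := ⟨by omega⟩
  have hlen : 1 < p.length := by have := p.length_ne_one; omega
  have hhom := hG.card_mul_indepNum_le p.toCirculantHom
  have hcycle := two_mul_indepNum_circulantGraph_one_le hlen
  have hcard : 0 < Fintype.card α := Fintype.card_pos_iff.mpr ⟨u⟩
  rw [_root_.indepNum, cliqueNum_compl] at heq
  rw [ZMod.card, ← heq] at hhom
  generalize (circulantGraph ({1} : Set (ZMod p.length))).indepNum = b at hhom hcycle
  have hbk : b ≤ k := by omega
  nlinarith

theorem stmt8 [Fintype α] (G : SimpleGraph α) (hG : VertexTransitive G)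
    (hE : G.edgeSet.Nonempty) (heq : 2 * _root_.indepNum G = Fintype.card α) :
    G.Colorable 2 :=
  stmt8_general G hG heq
end

section
/- Let G be a finite vertex-transitive bipartite graph with at least one edge, and suppose A is an independent set of G with 0 < |A| < α(G) and |A|·|V(G)| = α(G)·|N[A]|. Then G is disconnected. -/
open Finset SimpleGraph

variable {α β : Type*}

/-- A set of vertices is independent iff it is a clique in the complement. -/
def IsIndepSet' (G : SimpleGraph α) (s : Set α) : Prop := Gᶜ.IsClique s

/-- The independence number: the clique number of the complement. -/
noncomputable def indepNum' (G : SimpleGraph α) : ℕ := Gᶜ.cliqueNum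

/-
A vertex-transitive graph is `d`-regular. Double counting the edges between a set `S` and its open
neighbourhood `N(S)` gives `d·|S| = ∑_{b ∈ N(S)} |N(b) ∩ S| ≤ d·|N(S)|`, so if `|N(S)| ≤ |S|` then
every neighbour of a vertex of `N(S)` lies in `S`. For the independent set `A`, the hypothesis
`|A|·|V| = α·|N[A]|` together with `|V| ≤ 2α` (a bipartite graph is covered by two independent
sets) gives `|N(A)| ≤ |A|`, so `A ∪ N(A)` is closed under adjacency. In a connected graph it is
then everything, whence `|N[A]| = |V|` and `|A| = α`, contradicting `|A| < α`.
-/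

theorem VertexTransitive.isRegularOfDegree [Fintype α] {G : SimpleGraph α} [DecidableRel G.Adj]
    (hG : VertexTransitive G) (v : α) : G.IsRegularOfDegree (G.degree v) := fun w => by
  obtain ⟨φ, rfl⟩ := hG v w
  exact φ.degree_eq v

theorem SimpleGraph.Colorable.card_le_mul_indepNum [Fintype α] {G : SimpleGraph α} {k : ℕ}
    (hG : G.Colorable k) : Fintype.card α ≤ k * G.indepNum := by
  classical
  obtain ⟨C⟩ := hG
  calc Fintype.card α = ∑ c : Fin k, #{v | C v = c} := by
        rw [← card_univ, card_eq_sum_card_fiberwise (fun v _ => mem_univ (C v))]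
    _ ≤ ∑ _c : Fin k, G.indepNum := by
        refine sum_le_sum fun c _ => IsIndepSet.card_le_indepNum ?_
        simpa [Coloring.colorClass] using C.isIndepSet_colorClass c
    _ = k * G.indepNum := by simp

theorem SimpleGraph.Reachable.mem_of_adj_closed {G : SimpleGraph α} {s : Set α}
    (hs : ∀ a ∈ s, ∀ b, G.Adj a b → b ∈ s) {u v : α} (h : G.Reachable u v) (hu : u ∈ s) :
    v ∈ s := by
  obtain ⟨w⟩ := h
  induction w with
  | nil => exact hu
  | cons hadj _ ih => exact ih (hs _ hu _ hadj)

section Neighbourhood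

variable [Fintype α] {G : SimpleGraph α} [DecidableRel G.Adj] {d : ℕ}

theorem card_filter_adj_le (h : G.IsRegularOfDegree d) (S : Finset α) (b : α) :
    #{a ∈ S | G.Adj a b} ≤ d := by
  rw [← h.degree_eq b, ← card_neighborFinset_eq_degree]
  exact card_le_card fun a ha => (mem_neighborFinset ..).2 (mem_filter.1 ha).2.symm

variable [DecidableEq α]

variable (G) in
def openNbhd (S : Finset α) : Finset α := S.biUnion fun a => G.neighborFinset a

theorem mem_openNbhd {S : Finset α} {b : α} : b ∈ openNbhd G S ↔ ∃ a ∈ S, G.Adj a b := by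
  simp [openNbhd]

theorem closedNbhd_coe (S : Finset α) :
    closedNbhd G ↑S = ↑(S ∪ openNbhd G S) := by
  ext b
  simp [closedNbhd, mem_openNbhd]

theorem SimpleGraph.IsIndepSet.disjoint_openNbhd {S : Finset α} (hS : G.IsIndepSet ↑S) :
    Disjoint S (openNbhd G S) := by
  refine Finset.disjoint_left.2 fun b hbS hbN => ?_
  obtain ⟨a, haS, hab⟩ := mem_openNbhd.1 hbN
  exact hS haS hbS hab.ne hab

theorem sum_card_filter_adj_openNbhd (h : G.IsRegularOfDegree d) (S : Finset α) :
    ∑ b ∈ openNbhd G S, #{a ∈ S | G.Adj a b} = #S * d := by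
  calc _ = ∑ a ∈ S, #((openNbhd G S).bipartiteAbove G.Adj a) :=
        (sum_card_bipartiteAbove_eq_sum_card_bipartiteBelow _).symm
    _ = ∑ _a ∈ S, d := sum_congr rfl fun a ha => ?_
    _ = #S * d := by rw [sum_const, smul_eq_mul]
  have : (openNbhd G S).bipartiteAbove G.Adj a = G.neighborFinset a := by
    ext b
    simp only [bipartiteAbove, mem_filter, mem_neighborFinset, mem_openNbhd]
    exact ⟨And.right, fun hab => ⟨⟨a, ha, hab⟩, hab⟩⟩
  rw [this, card_neighborFinset_eq_degree, h.degree_eq]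

theorem mem_of_adj_of_card_openNbhd_le (h : G.IsRegularOfDegree d) {S : Finset α}
    (hcard : #(openNbhd G S) ≤ #S) {b c : α} (hb : b ∈ openNbhd G S) (hbc : G.Adj b c) :
    c ∈ S := by
  have hsum : ∑ b ∈ openNbhd G S, #{a ∈ S | G.Adj a b} = ∑ _b ∈ openNbhd G S, d := by
    refine le_antisymm (sum_le_sum fun b _ => card_filter_adj_le h S b) ?_
    rw [sum_const, smul_eq_mul, sum_card_filter_adj_openNbhd h]
    exact Nat.mul_le_mul_right d hcard
  have hfull : #{a ∈ S | G.Adj a b} = #(G.neighborFinset b) := by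
    rw [card_neighborFinset_eq_degree, h.degree_eq,
      (sum_eq_sum_iff_of_le fun b _ => card_filter_adj_le h S b).1 hsum b hb]
  have hsub : {a ∈ S | G.Adj a b} ⊆ G.neighborFinset b :=
    fun a ha => (mem_neighborFinset ..).2 (mem_filter.1 ha).2.symm
  have hc : c ∈ G.neighborFinset b := (mem_neighborFinset ..).2 hbc
  rw [← eq_of_subset_of_card_le hsub hfull.ge] at hc
  exact (mem_filter.1 hc).1

theorem SimpleGraph.Connected.union_openNbhd_eq_univ (hconn : G.Connected)
    (h : G.IsRegularOfDegree d) {S : Finset α} (hS : S.Nonempty)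
    (hcard : #(openNbhd G S) ≤ #S) : S ∪ openNbhd G S = univ := by
  obtain ⟨u, hu⟩ := hS
  have hclosed : ∀ a ∈ (↑(S ∪ openNbhd G S) : Set α), ∀ b, G.Adj a b →
      b ∈ (↑(S ∪ openNbhd G S) : Set α) := by
    intro a ha b hab
    simp only [coe_union, Set.mem_union, mem_coe] at ha ⊢
    rcases ha with ha | ha
    · exact Or.inr (mem_openNbhd.2 ⟨a, ha, hab⟩)
    · exact Or.inl (mem_of_adj_of_card_openNbhd_le h hcard ha hab)
  exact eq_univ_of_forall fun v =>
    mem_coe.1 ((hconn.preconnected u v).mem_of_adj_closed hclosed (by simp [hu]))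

end Neighbourhood

theorem stmt10_general [Fintype α] (G : SimpleGraph α) (hG : VertexTransitive G)
    (hbip : G.Colorable 2)
    (A : Set α) (hA : IsIndepSet' G A)
    (hpos : 0 < A.ncard) (hlt : A.ncard < indepNum' G)
    (heq : A.ncard * Fintype.card α = indepNum' G * (closedNbhd G A).ncard) :
    ¬ G.Connected := by
  classical
  intro hconn
  obtain ⟨S, rfl⟩ := A.toFinite.exists_finset_coe
  have hS : G.IsIndepSet ↑S := (isClique_compl G).1 hA
  have hα : Fintype.card α ≤ 2 * indepNum' G := by
    rw [indepNum', cliqueNum_compl]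
    exact hbip.card_le_mul_indepNum
  rw [Set.ncard_coe_finset] at hpos hlt heq
  obtain ⟨u, hu⟩ := card_pos.1 hpos
  rw [closedNbhd_coe, Set.ncard_coe_finset, card_union_of_disjoint hS.disjoint_openNbhd] at heq
  have hN : #(openNbhd G S) ≤ #S := by nlinarith
  have hcover :=
    congrArg card (hconn.union_openNbhd_eq_univ (hG.isRegularOfDegree u) ⟨u, hu⟩ hN)
  rw [card_union_of_disjoint hS.disjoint_openNbhd, card_univ] at hcover
  rw [hcover] at heq
  have hn : 0 < Fintype.card α := by omega
  exact hlt.ne (Nat.eq_of_mul_eq_mul_right hn heq)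

theorem stmt10 [Fintype α] (G : SimpleGraph α) (hG : VertexTransitive G)
    (hbip : G.Colorable 2) (hE : G.edgeSet.Nonempty)
    (A : Set α) (hA : IsIndepSet' G A)
    (hpos : 0 < A.ncard) (hlt : A.ncard < indepNum' G)
    (heq : A.ncard * Fintype.card α = indepNum' G * (closedNbhd G A).ncard) :
    ¬ G.Connected :=
  stmt10_general G hG hbip A hA hpos hlt heq
end

section
/- Let S be an independent set of the direct product G × H, and for each vertex x of H let A_x = {a ∈ V(G) : x ∈ X_a and x has a neighbor in X_a}, where X_a = {y ∈ V(H) : (a,y) ∈ S}. Then A_x is an independent set of G for every x ∈ V(H). -/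
open Finset SimpleGraph

variable {α β : Type*}

theorem IsIndepSet.notMem_of_adj {G : SimpleGraph α} {s : Set α}
    (hs : _root_.IsIndepSet G s) {u v : α} (huv : G.Adj u v) (hu : u ∈ s) : v ∉ s :=
  fun hv => ((compl_adj G u v).mp (hs hu hv huv.ne)).2 huv

theorem isIndepSet_of_forall_not_adj {G : SimpleGraph α} {s : Set α}
    (h : ∀ u ∈ s, ∀ v ∈ s, ¬G.Adj u v) : _root_.IsIndepSet G s :=
  fun u hu v hv huv => (compl_adj G u v).mpr ⟨huv, h u hu v hv⟩

theorem stmt13 (G : SimpleGraph α) (H : SimpleGraph β)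
    (S : Set (α × β)) (hS : _root_.IsIndepSet (tensorProd G H) S) (x : β) :
    _root_.IsIndepSet G {a : α | (a, x) ∈ S ∧ ∃ y : β, H.Adj x y ∧ (a, y) ∈ S} := by
  refine isIndepSet_of_forall_not_adj fun a ⟨hax, _⟩ b ⟨_, z, hxz, hbz⟩ hab => ?_
  have hadj : (tensorProd G H).Adj (a, x) (b, z) := ⟨hab, hxz⟩
  exact hS.notMem_of_adj hadj hax hbz
end
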